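/- For all nonnegative integers n ≥ k, Σ_{m=k}^{n} S2_C(n, m) · S1_C(m, k) = δ_{n,k} (Kronecker delta, as an element of K), where S1_C and S2_C denote the Stirling-Carlitz numbers of the first and second kind respectively. -/

import Mathlib

open scoped Classical
open PowerSeries Finset

noncomputable section

variable (F : Type) [Field F] [Fintype F]

/-- The rational function field `K = 𝔽_r(T)`. -/
abbrev K : Type := RatFunc F

/-- `r`, the cardinality of the finite field of constants. -/
def rr : ℕ := Fintype.card F

/-- The variable `T` of the rational function field. -/
def Tv : K F := RatFunc.X

/-- `[i] = T^{r^i} - T`. -/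
def br (i : ℕ) : K F := Tv F ^ (rr F) ^ i - Tv F

/-- `D_0 = 1`, `D_i = [i] · D_{i-1}^r`. -/
def D : ℕ → K F
  | 0 => 1
  | i + 1 => br F (i + 1) * D i ^ rr F

/-- `L_0 = 1`, `L_i = [i] · L_{i-1}`. -/
def L : ℕ → K F
  | 0 => 1
  | i + 1 => br F (i + 1) * L i

/-- The Carlitz factorial `Π(n) = ∏_j D_j^{c_j}`, where `c_j = n / r^j % r` are the
base-`r` digits of `n` (all digits with index `> n` vanish since `r ≥ 2`). -/
def Cf (n : ℕ) : K F := ∏ j ∈ Finset.range (n + 1), D F j ^ (n / (rr F) ^ j % rr F)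

/-- The Carlitz logarithm `log_C(z) = Σ_{i ≥ 0} (-1)^i z^{r^i} / L_i`: the coefficient of
`z^m` is `(-1)^i / L_i` if `m = r^i` and `0` otherwise (note `i ≤ r^i = m` since `r ≥ 2`). -/
def logC : PowerSeries (K F) :=
  PowerSeries.mk fun m =>
    ∑ i ∈ Finset.range (m + 1), if m = (rr F) ^ i then (-1 : K F) ^ i / L F i else 0

/-- The Carlitz exponential `e_C(z) = Σ_{i ≥ 0} z^{r^i} / D_i`. -/
def eC : PowerSeries (K F) :=
  PowerSeries.mk fun m =>
    ∑ i ∈ Finset.range (m + 1), if m = (rr F) ^ i then 1 / D F i else 0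

/-- The power series `log_C(z)/z`. -/
def logCdivZ : PowerSeries (K F) :=
  PowerSeries.mk fun n => PowerSeries.coeff (n + 1) (logC F)

/-- The power series `e_C(z)/z`. -/
def eCdivZ : PowerSeries (K F) :=
  PowerSeries.mk fun n => PowerSeries.coeff (n + 1) (eC F)

/-!
By the defining generating functions, `∑ₘ S2_C(n, m) S1_C(m, k)` is `Π(n)/Π(k)` times the
coefficient of `zⁿ` in `log_C(e_C(z))ᵏ`, so it suffices that `log_C(e_C(z)) = z`.
Both series are `r`-linear, `∑ cᵢ z^{rⁱ}`, and raising to the power `rⁱ` is a Frobenius, so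
composing them twists the convolution of coefficients: the coefficient of `z^{r^N}` in
`log_C(e_C(z))` is `∑_{i+j=N} (-1)ⁱ / (Lᵢ D_j^{rⁱ})`. For `N ≥ 1` this vanishes: multiplying by
`[N] = [i] + [j]^{rⁱ}` splits it into two sums that cancel term by term, because
`[i] / Lᵢ = 1 / L_{i-1}` and `[j]^{rⁱ} / D_j^{rⁱ} = 1 / D_{j-1}^{r^{i+1}}`.
-/

namespace PowerSeries

variable {R : Type*} [CommRing R]

theorem coeff_pow_eq_zero_of_lt {f : R⟦X⟧} (hf : constantCoeff f = 0) {m n : ℕ} (h : n < m) :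
    coeff n (f ^ m) = 0 :=
  coeff_of_lt_order n ((Nat.cast_lt.mpr h).trans_le (le_order_pow_of_constantCoeff_eq_zero m hf))

theorem coeff_subst_pow_eq_sum_Icc {f g : R⟦X⟧} (hf : constantCoeff f = 0)
    (hg : constantCoeff g = 0) (k n : ℕ) :
    coeff n ((f ^ k).subst g) = ∑ m ∈ Icc k n, coeff m (f ^ k) * coeff n (g ^ m) := by
  rw [coeff_subst' (HasSubst.of_constantCoeff_zero' hg)]
  refine finsum_eq_sum_of_support_subset _ fun m hm => ?_
  simp only [Function.mem_support, smul_eq_mul] at hm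
  simp only [coe_Icc, Set.mem_Icc]
  constructor
  · by_contra! h
    exact hm (by rw [coeff_pow_eq_zero_of_lt hf h, zero_mul])
  · by_contra! h
    exact hm (by rw [coeff_pow_eq_zero_of_lt hg h, mul_zero])

theorem coeff_pow_expChar_pow (p : ℕ) [ExpChar R p] (f : R⟦X⟧) (e n : ℕ) :
    coeff n (f ^ p ^ e) = if p ^ e ∣ n then coeff (n / p ^ e) f ^ p ^ e else 0 := by
  have hp : p ≠ 0 := expChar_ne_zero R p
  rw [← MvPowerSeries.map_iterateFrobenius_expand p hp f e]
  change coeff n (map (iterateFrobenius R p e) (expand (p ^ e) (pow_ne_zero e hp) f)) = _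
  rw [coeff_map, coeff_expand]
  split_ifs <;> simp [iterateFrobenius_def, zero_pow (pow_ne_zero e hp)]

theorem coeff_pow_pow_of_eq_expChar_pow {p q s : ℕ} [ExpChar R p] (hqp : q = p ^ s)
    (f : R⟦X⟧) (i n : ℕ) :
    coeff n (f ^ q ^ i) = if q ^ i ∣ n then coeff (n / q ^ i) f ^ q ^ i else 0 := by
  have h : q ^ i = p ^ (s * i) := by rw [hqp, ← pow_mul]
  rw [h, coeff_pow_expChar_pow]

/-- The `q`-linearized series `∑ i, c i * X ^ q ^ i`, with its coefficients written as in the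
definitions of `logC` and `eC`. -/
def linearizedSeries (q : ℕ) (c : ℕ → R) : R⟦X⟧ :=
  mk fun m => ∑ i ∈ range (m + 1), if m = q ^ i then c i else 0

section linearizedSeries

variable {q : ℕ}

theorem coeff_linearizedSeries_pow (hq : 1 < q) (c : ℕ → R) (i : ℕ) :
    coeff (q ^ i) (linearizedSeries q c) = c i := by
  rw [linearizedSeries, coeff_mk, sum_eq_single_of_mem i
    (mem_range_succ_iff.mpr (Nat.lt_pow_self hq).le), if_pos rfl]
  exact fun j _ hji => if_neg fun h => hji (Nat.pow_right_injective hq h).symm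

theorem coeff_linearizedSeries_of_forall_ne (c : ℕ → R) {n : ℕ} (hn : ∀ i, n ≠ q ^ i) :
    coeff n (linearizedSeries q c) = 0 := by
  rw [linearizedSeries, coeff_mk]
  exact sum_eq_zero fun i _ => if_neg (hn i)

theorem constantCoeff_linearizedSeries (hq : 1 < q) (c : ℕ → R) :
    constantCoeff (linearizedSeries q c) = 0 := by
  rw [← coeff_zero_eq_constantCoeff_apply]
  exact coeff_linearizedSeries_of_forall_ne c fun i h => (pow_pos (by omega) i).ne' h.symm

theorem linearizedSeries_eq_X (hq : 1 < q) {c : ℕ → R} (h₀ : c 0 = 1)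
    (h : ∀ i, c (i + 1) = 0) : linearizedSeries q c = X := by
  ext n
  rw [coeff_X]
  by_cases hn : ∃ i, n = q ^ i
  · obtain ⟨i, rfl⟩ := hn
    rw [coeff_linearizedSeries_pow hq]
    cases i with
    | zero => simp [h₀]
    | succ i => rw [h, if_neg (Nat.one_lt_pow i.succ_ne_zero hq).ne']
  · push Not at hn
    rw [coeff_linearizedSeries_of_forall_ne c hn, if_neg (by simpa using hn 0)]

theorem coeff_subst_linearizedSeries (hq : 1 < q) (a b : ℕ → R) (n : ℕ) :
    coeff n ((linearizedSeries q a).subst (linearizedSeries q b)) =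
      ∑ᶠ i, a i * coeff n (linearizedSeries q b ^ q ^ i) := by
  rw [coeff_subst' (HasSubst.of_constantCoeff_zero' (constantCoeff_linearizedSeries hq b)),
    ← finsum_mem_univ, finsum_mem_inter_support_eq' _ _ (Set.range (q ^ ·)),
    finsum_mem_range (Nat.pow_right_injective hq)]
  · simp only [smul_eq_mul, coeff_linearizedSeries_pow hq]
  · intro d hd
    simp only [Set.mem_univ, Set.mem_range, true_iff]
    by_contra! h
    exact hd (by
      dsimp only
      rw [coeff_linearizedSeries_of_forall_ne a fun i => (h i).symm, zero_smul])

variable {p s : ℕ} [ExpChar R p]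

theorem coeff_pow_pow_linearizedSeries_pow (hq : 1 < q) (hqp : q = p ^ s) (c : ℕ → R)
    (i N : ℕ) :
    coeff (q ^ N) (linearizedSeries q c ^ q ^ i) = if i ≤ N then c (N - i) ^ q ^ i else 0 := by
  rw [coeff_pow_pow_of_eq_expChar_pow hqp]
  by_cases hiN : i ≤ N
  · rw [if_pos (pow_dvd_pow q hiN), if_pos hiN, Nat.pow_div hiN (by omega),
      coeff_linearizedSeries_pow hq]
  · rw [if_neg (by rwa [Nat.pow_dvd_pow_iff_le_right hq]), if_neg hiN]

theorem coeff_pow_pow_linearizedSeries_of_forall_ne (hq : 1 < q) (hqp : q = p ^ s)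
    (c : ℕ → R) (i : ℕ) {n : ℕ} (hn : ∀ j, n ≠ q ^ j) :
    coeff n (linearizedSeries q c ^ q ^ i) = 0 := by
  rw [coeff_pow_pow_of_eq_expChar_pow hqp]
  split_ifs with hdvd
  · rw [coeff_linearizedSeries_of_forall_ne c, zero_pow (pow_pos (by omega) i).ne']
    intro j hj
    exact hn (i + j) (by rw [pow_add, ← hj, Nat.mul_div_cancel' hdvd])
  · rfl

theorem linearizedSeries_subst (hq : 1 < q) (hqp : q = p ^ s) (a b : ℕ → R) :
    (linearizedSeries q a).subst (linearizedSeries q b) =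
      linearizedSeries q fun N => ∑ x ∈ antidiagonal N, a x.1 * b x.2 ^ q ^ x.1 := by
  ext n
  rw [coeff_subst_linearizedSeries hq]
  by_cases hn : ∃ N, n = q ^ N
  · obtain ⟨N, rfl⟩ := hn
    rw [coeff_linearizedSeries_pow hq,
      Nat.sum_antidiagonal_eq_sum_range_succ (fun i j => a i * b j ^ q ^ i),
      finsum_eq_sum_of_support_subset (s := range (N + 1))]
    · refine sum_congr rfl fun i hi => ?_
      rw [coeff_pow_pow_linearizedSeries_pow hq hqp, if_pos (mem_range_succ_iff.mp hi)]
    · intro i hi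
      by_contra hiN
      simp only [coe_range, Set.mem_Iio, not_lt] at hiN
      exact hi (by
        dsimp only
        rw [coeff_pow_pow_linearizedSeries_pow hq hqp, if_neg (by omega), mul_zero])
  · push Not at hn
    rw [coeff_linearizedSeries_of_forall_ne _ hn]
    exact finsum_eq_zero_of_forall_eq_zero fun i => by
      rw [coeff_pow_pow_linearizedSeries_of_forall_ne hq hqp b i hn, mul_zero]

end linearizedSeries

end PowerSeries

theorem one_lt_rr : 1 < rr F := Fintype.one_lt_card

theorem exists_expChar_rr_eq_pow : ∃ p s : ℕ, ExpChar (K F) p ∧ rr F = p ^ s := by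
  obtain ⟨p, _, s, hp, hcard⟩ := FiniteField.card' F
  have := Fact.mk hp
  exact ⟨p, s, inferInstance, hcard⟩

theorem logC_eq_linearizedSeries :
    logC F = linearizedSeries (rr F) fun i => (-1) ^ i / L F i := rfl

theorem eC_eq_linearizedSeries : eC F = linearizedSeries (rr F) fun i => 1 / D F i := rfl

theorem constantCoeff_logC : constantCoeff (logC F) = 0 :=
  constantCoeff_linearizedSeries (one_lt_rr F) _

theorem constantCoeff_eC : constantCoeff (eC F) = 0 :=
  constantCoeff_linearizedSeries (one_lt_rr F) _

theorem br_ne_zero {i : ℕ} (hi : i ≠ 0) : br F i ≠ 0 := by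
  have h : br F i = algebraMap (Polynomial F) (K F) (Polynomial.X ^ rr F ^ i - Polynomial.X) := by
    simp [br, Tv]
  rw [h, map_ne_zero_iff _ (RatFunc.algebraMap_injective F)]
  exact FiniteField.X_pow_card_pow_sub_X_ne_zero F hi (one_lt_rr F)

theorem D_ne_zero (i : ℕ) : D F i ≠ 0 := by
  induction i with
  | zero => exact one_ne_zero
  | succ i ih => exact mul_ne_zero (br_ne_zero F i.succ_ne_zero) (pow_ne_zero _ ih)

theorem Cf_ne_zero (n : ℕ) : Cf F n ≠ 0 :=
  prod_ne_zero_iff.mpr fun j _ => pow_ne_zero _ (D_ne_zero F j)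

section Frobenius

variable {F} {p s : ℕ} [ExpChar (K F) p]

theorem br_add (hr : rr F = p ^ s) (i j : ℕ) : br F (i + j) = br F i + br F j ^ rr F ^ i := by
  have h : rr F ^ i = p ^ (s * i) := by rw [hr, pow_mul]
  rw [br, br, br, h, sub_pow_expChar_pow, ← pow_mul, ← h, ← pow_add]
  ring

theorem sum_antidiagonal_div_L_mul_one_div_D_pow_eq_zero (hr : rr F = p ^ s) (N : ℕ) :
    ∑ x ∈ antidiagonal (N + 1), (-1) ^ x.1 / L F x.1 * (1 / D F x.2) ^ rr F ^ x.1 = 0 := by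
  set t : ℕ → ℕ → K F := fun i j => (-1) ^ i / L F i * (1 / D F j) ^ rr F ^ i
  set u : ℕ → ℕ → K F := fun i j => (-1) ^ i / L F i * (1 / D F j) ^ rr F ^ (i + 1)
  have hleft (i j : ℕ) : br F (i + 1) * t (i + 1) j = -u i j := by
    have := br_ne_zero F i.succ_ne_zero
    simp only [t, u, L, pow_succ]
    field_simp
  have hright (i j : ℕ) : br F (j + 1) ^ rr F ^ i * t i (j + 1) = u i j := by
    have := br_ne_zero F j.succ_ne_zero
    have := D_ne_zero F j
    simp only [t, u, D, div_eq_mul_inv, one_mul, mul_inv, mul_pow, inv_pow, ← pow_mul, pow_succ']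
    field_simp
  have hbr0 : br F 0 = 0 := by simp [br]
  have hfirst : ∑ x ∈ antidiagonal (N + 1), br F x.1 * t x.1 x.2 =
      -∑ x ∈ antidiagonal N, u x.1 x.2 := by
    rw [Nat.sum_antidiagonal_succ, hbr0, zero_mul, zero_add, ← sum_neg_distrib]
    exact sum_congr rfl fun x _ => hleft x.1 x.2
  have hsecond : ∑ x ∈ antidiagonal (N + 1), br F x.2 ^ rr F ^ x.1 * t x.1 x.2 =
      ∑ x ∈ antidiagonal N, u x.1 x.2 := by
    rw [Nat.sum_antidiagonal_succ', hbr0, zero_pow (pow_pos (one_lt_rr F).le _).ne', zero_mul,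
      zero_add]
    exact sum_congr rfl fun x _ => hright x.1 x.2
  have hsplit : br F (N + 1) * ∑ x ∈ antidiagonal (N + 1), t x.1 x.2 =
      ∑ x ∈ antidiagonal (N + 1), br F x.1 * t x.1 x.2 +
        ∑ x ∈ antidiagonal (N + 1), br F x.2 ^ rr F ^ x.1 * t x.1 x.2 := by
    rw [mul_sum, ← sum_add_distrib]
    refine sum_congr rfl fun x hx => ?_
    rw [← mem_antidiagonal.mp hx, br_add hr, add_mul]
  rw [hfirst, hsecond, neg_add_cancel] at hsplit
  exact (mul_eq_zero.mp hsplit).resolve_left (br_ne_zero F N.succ_ne_zero)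

end Frobenius

theorem logC_subst_eC : (logC F).subst (eC F) = X := by
  obtain ⟨p, s, hp, hr⟩ := exists_expChar_rr_eq_pow F
  rw [logC_eq_linearizedSeries, eC_eq_linearizedSeries, linearizedSeries_subst (one_lt_rr F) hr]
  exact linearizedSeries_eq_X (one_lt_rr F) (by simp [L, D])
    (sum_antidiagonal_div_L_mul_one_div_D_pow_eq_zero hr)

theorem stirlingCarlitz_orthogonality_second
    (S1C S2C : ℕ → ℕ → K F)
    (hS1C : ∀ n k : ℕ,
      PowerSeries.coeff n (logC F ^ k) / Cf F k = S1C n k / Cf F n)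
    (hS2C : ∀ n k : ℕ,
      PowerSeries.coeff n (eC F ^ k) / Cf F k = S2C n k / Cf F n)
    (n k : ℕ) :
    ∑ m ∈ Finset.Icc k n, S2C n m * S1C m k = if n = k then (1 : K F) else 0 := by
  have hS1 (m j : ℕ) : S1C m j = coeff m (logC F ^ j) / Cf F j * Cf F m :=
    (div_eq_iff (Cf_ne_zero F m)).mp (hS1C m j).symm
  have hS2 (m j : ℕ) : S2C m j = coeff m (eC F ^ j) / Cf F j * Cf F m :=
    (div_eq_iff (Cf_ne_zero F m)).mp (hS2C m j).symm
  calc ∑ m ∈ Icc k n, S2C n m * S1C m k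
      = Cf F n / Cf F k * ∑ m ∈ Icc k n, coeff m (logC F ^ k) * coeff n (eC F ^ m) := by
        rw [mul_sum]
        refine sum_congr rfl fun m _ => ?_
        have := Cf_ne_zero F m
        rw [hS1, hS2]
        field_simp
    _ = Cf F n / Cf F k * coeff n ((logC F ^ k).subst (eC F)) := by
        rw [coeff_subst_pow_eq_sum_Icc (constantCoeff_logC F) (constantCoeff_eC F)]
    _ = Cf F n / Cf F k * coeff n (X ^ k) := by
        rw [subst_pow (HasSubst.of_constantCoeff_zero' (constantCoeff_eC F)), logC_subst_eC]
    _ = if n = k then 1 else 0 := by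
        rw [coeff_X_pow]
        split_ifs with h
        · rw [h, mul_one, div_self (Cf_ne_zero F k)]
        · rw [mul_zero]
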